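/- arXiv:1604.07371 — 5 statements merged into one kernel-verified Lean document; each statement's English description precedes it below -/
import Mathlib

section
/- (Greedy proportional allocation achieves the optimal makespan.) Assume P > 0 and p_j ≤ P for every task j. Then the function x defined by x_t(j) = p_j/P for t ∈ [0,P) and x_t(j) = 0 otherwise is a rate allocation on [0,P] that completes all tasks, with ∫_ℝ x_t(j) dt = p_j for every j. Hence (combined with the lower bound T ≥ P for any completing allocation) the optimal makespan equals P. -/
open MeasureTheory

/-- **Greedy proportional allocation achieves the optimal makespan.**
Assume `P = max_d ∑ j, a j d * p j > 0` and `p j ≤ P` for every task `j`.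
Then `x` defined by `x t j = p j / P` for `t ∈ [0,P)` and `0` otherwise is a
rate allocation on `[0,P]` (measurable, rates in `[0,1]`, supported on `[0,P)`,
never over-allocating any resource) that completes all tasks, with
`∫ t, x t j = p j` for every `j`. -/
theorem greedy_proportional_optimal
    {J D : Type*} [Fintype J] [Nonempty J] [Fintype D] [Nonempty D]
    (p : J → ℝ) (a : J → D → ℝ)
    (hp : ∀ j, 0 ≤ p j)
    (ha0 : ∀ j d, 0 ≤ a j d) (ha1 : ∀ j d, a j d ≤ 1)
    (P : ℝ)
    (hPdef : P = Finset.univ.sup' Finset.univ_nonempty (fun d => ∑ j, a j d * p j))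
    (hP : 0 < P) (hpP : ∀ j, p j ≤ P)
    (x : ℝ → J → ℝ)
    (hxdef : ∀ t j, x t j = if t ∈ Set.Ico (0 : ℝ) P then p j / P else 0) :
    (∀ j, Measurable fun t => x t j) ∧
    (∀ t j, 0 ≤ x t j ∧ x t j ≤ 1) ∧
    (∀ t j, t ∉ Set.Ico (0 : ℝ) P → x t j = 0) ∧
    (∀ t d, ∑ j, a j d * x t j ≤ 1) ∧
    (∀ j, (∫ t, x t j) = p j) := by

  have hxind : ∀ j, (fun t => x t j) = (Set.Ico (0:ℝ) P).indicator (fun _ => p j / P) := by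
    intro j
    funext t
    rw [hxdef]
    by_cases h : t ∈ Set.Ico (0:ℝ) P <;> simp [h]
  refine ⟨?_, ?_, ?_, ?_, ?_⟩
  · intro j
    rw [hxind]
    exact (measurable_const).indicator measurableSet_Ico
  · intro t j
    rw [hxdef]
    constructor
    · split
      · exact div_nonneg (hp j) hP.le
      · exact le_refl 0
    · split
      · exact div_le_one_of_le₀ (hpP j) hP.le
      · norm_num
  · intro t j ht
    rw [hxdef, if_neg ht]
  · intro t d
    by_cases ht : t ∈ Set.Ico (0:ℝ) P
    · have hsum : ∑ j, a j d * p j ≤ P := by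
        rw [hPdef]
        exact Finset.le_sup' (fun d => ∑ j, a j d * p j) (Finset.mem_univ d)
      have : ∑ j, a j d * x t j = (∑ j, a j d * p j) / P := by
        rw [Finset.sum_div]
        refine Finset.sum_congr rfl fun j _ => ?_
        rw [hxdef, if_pos ht, mul_div_assoc]
      rw [this]
      exact div_le_one_of_le₀ hsum hP.le
    · have : ∑ j, a j d * x t j = 0 := by
        refine Finset.sum_eq_zero fun j _ => ?_
        rw [hxdef, if_neg ht, mul_zero]
      rw [this]; norm_num
  · intro j
    rw [hxind j, MeasureTheory.integral_indicator measurableSet_Ico]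
    rw [MeasureTheory.integral_const]
    simp [Real.volume_Ico, ENNReal.toReal_ofReal hP.le, max_eq_left hP.le,
      mul_div_cancel₀ _ hP.ne']
end

section
/- (Validity of the partitioned lower bound NewLB.) Suppose the finite task set V is partitioned into nonempty groups G_1, …, G_m and σ is a schedule respecting precedence and capacity such that, for each i < m, every task of G_i finishes no later than any task of G_{i+1} starts (i.e., max_{u∈G_i}(σ(u)+dur(u)) ≤ min_{v∈G_{i+1}} σ(v)). Then the makespan of σ is at least Σ_{i=1}^{m} max( CPLen(G_i), TWork(G_i) ). -/
/-- Critical-path length of the set `S`: the supremum of the sums of durations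
over `r`-paths all of whose tasks lie in `S` (`0` if `S` is empty). -/
noncomputable def CPLen {V : Type*} (r : V → V → Prop) (dur : V → ℝ) (S : Set V) : ℝ :=
  sSup {x | ∃ l : List V, l.Chain' r ∧ (∀ v ∈ l, v ∈ S) ∧ x = (l.map dur).sum}

/-- Total work of the tasks in `S`, normalized by the capacity `C`. -/
noncomputable def TWork {V : Type*} (dur dem : V → ℝ) (C : ℝ) (S : Finset V) : ℝ :=
  (∑ v ∈ S, dur v * dem v) / C

/-!
Each group `G i` runs inside the window `[aᵢ, bᵢ]` from its earliest start to its latest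
finish. Inside a window, a precedence path runs sequentially, so its length is at most
`bᵢ - aᵢ`, and integrating the resource profile over the window shows that the work is at
most `C (bᵢ - aᵢ)`. The windows follow one another in time and lie in `[0, makespan]`,
so their lengths add up to at most the makespan.
-/

open MeasureTheory Set

theorem integral_indicator_Ico_const {x y : ℝ} (hxy : x ≤ y) (c : ℝ) :
    ∫ t, (Ico x y).indicator (fun _ => c) t = (y - x) * c := by
  rw [integral_indicator_const _ measurableSet_Ico, Real.volume_real_Ico_of_le hxy, smul_eq_mul]

theorem integrable_indicator_Ico_const (x y c : ℝ) :
    Integrable ((Ico x y).indicator fun _ : ℝ => c) :=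
  (integrable_indicator_iff measurableSet_Ico).2 <| integrableOn_const measure_Ico_lt_top.ne

section Window

variable {V : Type*} {r : V → V → Prop} {dur dem σ : V → ℝ} {C a b : ℝ}

theorem start_add_sum_dur_le_of_chain (hprec : ∀ u v, r u v → σ u + dur u ≤ σ v) :
    ∀ {v : V} {l : List V}, (v :: l).IsChain r → (∀ w ∈ v :: l, σ w + dur w ≤ b) →
      σ v + ((v :: l).map dur).sum ≤ b
  | v, [], _, hb => by simpa using hb v List.mem_cons_self
  | v, u :: l, hch, hb => by
    have hvu : σ v + dur v ≤ σ u := hprec v u (List.isChain_cons_cons.mp hch).1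
    have hrest := start_add_sum_dur_le_of_chain hprec hch.tail
      fun w hw => hb w (List.mem_cons_of_mem v hw)
    simp only [List.map_cons, List.sum_cons] at hrest ⊢
    linarith

theorem CPLen_le_of_window {S : Set V} (hprec : ∀ u v, r u v → σ u + dur u ≤ σ v)
    (hab : a ≤ b) (hS : ∀ v ∈ S, a ≤ σ v ∧ σ v + dur v ≤ b) :
    CPLen r dur S ≤ b - a := by
  refine Real.sSup_le ?_ (sub_nonneg.2 hab)
  rintro x ⟨l, hch, hlS, rfl⟩
  cases l with
  | nil => simpa using hab
  | cons v l =>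
    have hpath := start_add_sum_dur_le_of_chain hprec hch fun w hw => (hS w (hlS w hw)).2
    linarith [(hS v (hlS v List.mem_cons_self)).1]

open scoped Classical in
theorem sum_dur_mul_dem_le_of_window {S : Finset V} (hdur : ∀ v, 0 ≤ dur v) (hab : a ≤ b)
    (hS : ∀ v ∈ S, a ≤ σ v ∧ σ v + dur v ≤ b)
    (hcap : ∀ t : ℝ, ∑ v ∈ S.filter (fun v => σ v ≤ t ∧ t < σ v + dur v), dem v ≤ C) :
    ∑ v ∈ S, dur v * dem v ≤ C * (b - a) := by
  set usage : V → ℝ → ℝ := fun v => (Ico (σ v) (σ v + dur v)).indicator fun _ => dem v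
  have hload : ∀ t, ∑ v ∈ S, usage v t ≤ (Ico a b).indicator (fun _ => C) t := by
    intro t
    by_cases ht : t ∈ Ico a b
    · rw [indicator_of_mem ht]
      refine le_of_eq_of_le ?_ (hcap t)
      simp only [usage, indicator_apply, Finset.sum_filter, mem_Ico]
    · rw [indicator_of_notMem ht, Finset.sum_eq_zero fun v hv => indicator_of_notMem
        (fun hv' => ht (Ico_subset_Ico (hS v hv).1 (hS v hv).2 hv')) _]
  calc ∑ v ∈ S, dur v * dem v = ∫ t, ∑ v ∈ S, usage v t := by
        rw [integral_finsetSum S fun v _ => integrable_indicator_Ico_const _ _ _]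
        refine Finset.sum_congr rfl fun v _ => ?_
        rw [integral_indicator_Ico_const (le_add_of_nonneg_right (hdur v)), add_sub_cancel_left]
    _ ≤ ∫ t, (Ico a b).indicator (fun _ => C) t :=
        integral_mono (integrable_finsetSum S fun v _ => integrable_indicator_Ico_const _ _ _)
          (integrable_indicator_Ico_const _ _ _) hload
    _ = C * (b - a) := by rw [integral_indicator_Ico_const hab, mul_comm]

open scoped Classical in
theorem TWork_le_of_window [Fintype V] {S : Finset V} (hdur : ∀ v, 0 ≤ dur v)
    (hdem : ∀ v, 0 ≤ dem v) (hC : 0 < C) (hab : a ≤ b)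
    (hS : ∀ v ∈ S, a ≤ σ v ∧ σ v + dur v ≤ b)
    (hcap : ∀ t : ℝ,
      ∑ v ∈ Finset.univ.filter (fun v => σ v ≤ t ∧ t < σ v + dur v), dem v ≤ C) :
    TWork dur dem C S ≤ b - a := by
  rw [TWork, div_le_iff₀ hC, mul_comm]
  refine sum_dur_mul_dem_le_of_window hdur hab hS fun t => le_trans ?_ (hcap t)
  exact Finset.sum_le_sum_of_subset_of_nonneg
    (Finset.filter_subset_filter _ S.subset_univ) fun v _ _ => hdem v

end Window

theorem Fin.sum_sub_le_last_sub_zero {n : ℕ} (a b : Fin (n + 1) → ℝ)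
    (h : ∀ i : Fin n, b i.castSucc ≤ a i.succ) :
    ∑ i, (b i - a i) ≤ b (Fin.last n) - a 0 := by
  induction n with
  | zero => simp
  | succ n ih =>
    have hprefix := ih (a ∘ Fin.castSucc) (b ∘ Fin.castSucc) fun i => by
      simpa only [Function.comp_apply, Fin.succ_castSucc] using h i.castSucc
    have hlast := h (Fin.last n)
    rw [Fin.succ_last] at hlast
    rw [Fin.sum_univ_castSucc]
    simp only [Function.comp_apply, Fin.castSucc_zero] at hprefix
    linarith

open scoped Classical in
theorem newLB_valid_general {V : Type*} [Fintype V] [Nonempty V]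
    (r : V → V → Prop) (dur dem : V → ℝ) (C : ℝ) (σ : V → ℝ)
    (hdur : ∀ v, 0 ≤ dur v) (hdem : ∀ v, 0 ≤ dem v) (hC : 0 < C)
    (hσ : ∀ v, 0 ≤ σ v)
    (hprec : ∀ u v, r u v → σ u + dur u ≤ σ v)
    (hcap : ∀ t : ℝ,
      ∑ v ∈ Finset.univ.filter (fun v => σ v ≤ t ∧ t < σ v + dur v), dem v ≤ C)
    (m : ℕ) (G : Fin m → Finset V)
    (hne : ∀ i, (G i).Nonempty)
    (horder : ∀ (i : ℕ) (h1 : i < m) (h2 : i + 1 < m),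
      ∀ u ∈ G ⟨i, h1⟩, ∀ v ∈ G ⟨i + 1, h2⟩, σ u + dur u ≤ σ v) :
    ∑ i, max (CPLen r dur (↑(G i))) (TWork dur dem C (G i)) ≤
      Finset.univ.sup' Finset.univ_nonempty (fun v => σ v + dur v) := by
  cases m with
  | zero =>
    rw [Finset.univ_eq_empty, Finset.sum_empty]
    exact Finset.le_sup'_of_le (fun v => σ v + dur v)
      (Finset.mem_univ (Classical.arbitrary V)) (add_nonneg (hσ _) (hdur _))
  | succ n =>
    set start : Fin (n + 1) → ℝ := fun i => (G i).inf' (hne i) σ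
    set finish : Fin (n + 1) → ℝ := fun i => (G i).sup' (hne i) fun v => σ v + dur v
    have hwindow : ∀ i, ∀ v ∈ G i, start i ≤ σ v ∧ σ v + dur v ≤ finish i := fun i v hv =>
      ⟨Finset.inf'_le _ hv, Finset.le_sup' (fun v => σ v + dur v) hv⟩
    have hgroup : ∀ i, max (CPLen r dur (G i)) (TWork dur dem C (G i)) ≤ finish i - start i := by
      intro i
      obtain ⟨v, hv⟩ := hne i
      have hab : start i ≤ finish i := by linarith [hwindow i v hv, hdur v]
      exact max_le (CPLen_le_of_window hprec hab (hwindow i))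
        (TWork_le_of_window hdur hdem hC hab (hwindow i) hcap)
    have hchain : ∀ i : Fin n, finish i.castSucc ≤ start i.succ := fun i =>
      Finset.sup'_le _ _ fun u hu => Finset.le_inf' _ _ fun v hv =>
        horder i i.castSucc.isLt i.succ.isLt u hu v hv
    have hstart : 0 ≤ start 0 := Finset.le_inf' _ _ fun v _ => hσ v
    have hfinish : finish (Fin.last n) ≤ Finset.univ.sup' Finset.univ_nonempty
        (fun v => σ v + dur v) :=
      Finset.sup'_le _ _ fun v _ => Finset.le_sup' (fun v => σ v + dur v) (Finset.mem_univ v)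
    calc ∑ i, max (CPLen r dur (G i)) (TWork dur dem C (G i))
        ≤ ∑ i, (finish i - start i) := Finset.sum_le_sum fun i _ => hgroup i
      _ ≤ finish (Fin.last n) - start 0 := Fin.sum_sub_le_last_sub_zero start finish hchain
      _ ≤ _ := by linarith

open scoped Classical in
/-- **Validity of the partitioned lower bound `NewLB`.**
If `V` is partitioned into nonempty groups `G 0, …, G (m-1)` and `σ` is a
schedule respecting precedence and capacity such that every task of `G i`
finishes no later than any task of `G (i+1)` starts, then the makespan of `σ`
is at least `∑ i, max (CPLen (G i)) (TWork (G i))`. -/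
theorem newLB_valid {V : Type*} [Fintype V] [Nonempty V]
    (r : V → V → Prop) (dur dem : V → ℝ) (C : ℝ) (σ : V → ℝ)
    (hdur : ∀ v, 0 ≤ dur v) (hdem : ∀ v, 0 ≤ dem v) (hC : 0 < C)
    (hσ : ∀ v, 0 ≤ σ v)
    (hprec : ∀ u v, r u v → σ u + dur u ≤ σ v)
    (hcap : ∀ t : ℝ,
      ∑ v ∈ Finset.univ.filter (fun v => σ v ≤ t ∧ t < σ v + dur v), dem v ≤ C)
    (m : ℕ) (G : Fin m → Finset V)
    (hne : ∀ i, (G i).Nonempty)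
    (hdisj : ∀ i j, i ≠ j → Disjoint (G i) (G j))
    (hcover : ∀ v : V, ∃ i, v ∈ G i)
    (horder : ∀ (i : ℕ) (h1 : i < m) (h2 : i + 1 < m),
      ∀ u ∈ G ⟨i, h1⟩, ∀ v ∈ G ⟨i + 1, h2⟩, σ u + dur u ≤ σ v) :
    ∑ i, max (CPLen r dur (↑(G i))) (TWork dur dem C (G i)) ≤
      Finset.univ.sup' Finset.univ_nonempty (fun v => σ v + dur v) :=
  newLB_valid_general r dur dem C σ hdur hdem hC hσ hprec hcap m G hne horder
end

section
/- (Validity of the modified critical-path lower bound ModCP.) Let v_1, v_2, …, v_k be an r-path and let 1 < i < k be an index such that the task v_i belongs to a stage S ⊆ V with all-to-all dependencies to its path neighbors: r v_{i-1} u and r u v_{i+1} hold for every u ∈ S. Then for every schedule σ respecting precedence and capacity, the makespan of σ is at least Σ_{j≠i} dur(v_j) + max( max_{u∈S} dur(u), TWork(S) ). -/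
/-!
Write `A` for the end of `v (i-1)` and `B` for the start of `v (i+1)`. Chaining the precedence
constraints along the path gives `∑_{j<i} dur (v j) ≤ A` and `B + ∑_{j>i} dur (v j) ≤ makespan`,
so it suffices to show that the gap `B - A` dominates both terms of the `max`. Every task of the
stage runs inside `[A, B]`: this bounds its duration, and integrating the capacity constraint over
`[A, B]` bounds the total work of the stage by `C * (B - A)`.
-/

open MeasureTheory Finset

theorem sum_dur_mul_dem_le_mul_window {ι : Type*} (S : Finset ι) (σ dur dem : ι → ℝ)
    {C A B : ℝ} (hAB : A ≤ B) (hdur : ∀ u ∈ S, 0 ≤ dur u)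
    (hA : ∀ u ∈ S, A ≤ σ u) (hB : ∀ u ∈ S, σ u + dur u ≤ B)
    (hcap : ∀ t, ∑ u ∈ S with σ u ≤ t ∧ t < σ u + dur u, dem u ≤ C) :
    ∑ u ∈ S, dur u * dem u ≤ C * (B - A) := by
  let load (u : ι) : ℝ → ℝ := (Set.Ico (σ u) (σ u + dur u)).indicator fun _ => dem u
  have load_integrable (u : ι) : Integrable (load u) :=
    (integrable_indicator_iff measurableSet_Ico).2 <|
      integrableOn_const (by simp [Real.volume_Ico])
  have integral_load (u : ι) (hu : u ∈ S) : ∫ t in Set.Icc A B, load u t = dur u * dem u := by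
    rw [setIntegral_indicator measurableSet_Ico,
      Set.inter_eq_right.2 <|
        Set.Ico_subset_Icc_self.trans (Set.Icc_subset_Icc (hA u hu) (hB u hu)),
      setIntegral_const, Real.volume_real_Ico_of_le (by linarith [hdur u hu]),
      add_sub_cancel_left, smul_eq_mul]
  have sum_load_le (t : ℝ) : ∑ u ∈ S, load u t ≤ C := by
    simpa [load, Set.indicator_apply, sum_filter] using hcap t
  calc ∑ u ∈ S, dur u * dem u = ∫ t in Set.Icc A B, ∑ u ∈ S, load u t := by
        rw [integral_finsetSum S fun u _ => (load_integrable u).integrableOn]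
        exact (sum_congr rfl integral_load).symm
    _ ≤ ∫ _ in Set.Icc A B, C :=
        setIntegral_mono (integrable_finsetSum S fun u _ => load_integrable u).integrableOn
          (integrableOn_const (by simp [Real.volume_Icc])) sum_load_le
    _ = C * (B - A) := by
        rw [setIntegral_const, Real.volume_real_Icc_of_le hAB, smul_eq_mul, mul_comm]

theorem add_sum_Ico_le_of_add_le_succ (s d : ℕ → ℝ) {m n : ℕ} (hmn : m ≤ n)
    (hstep : ∀ j, m ≤ j → j < n → s j + d j ≤ s (j + 1)) :
    s m + ∑ j ∈ Ico m n, d j ≤ s n := by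
  induction n, hmn using Nat.le_induction with
  | base => simp
  | succ n hmn ih =>
    rw [sum_Ico_succ_top hmn]
    linarith [ih fun j hmj hjn => hstep j hmj (by omega), hstep n hmn (by omega)]

theorem Fin.sum_filter_val_ne {M : Type*} [AddCommMonoid M] (f : ℕ → M) {n i : ℕ}
    (hi : i < n) :
    ∑ j ∈ univ.filter (fun j : Fin n => (j : ℕ) ≠ i), f j =
      ∑ j ∈ range i, f j + ∑ j ∈ Ico (i + 1) n, f j := by
  rw [sum_filter, Fin.sum_univ_eq_sum_range (fun j => if j ≠ i then f j else 0), range_eq_Ico,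
    ← sum_Ico_consecutive _ (Nat.zero_le i) hi.le, ← sum_Ico_consecutive _ (Nat.le_succ i) hi,
    Nat.Ico_succ_singleton, sum_singleton, if_neg (not_not.2 rfl), zero_add,
    ← range_eq_Ico]
  congr 1 <;> exact sum_congr rfl fun j hj => if_pos (by simp at hj; omega)

theorem max_sup'_TWork_le_window {ι : Type*} (S : Finset ι) (hSne : S.Nonempty)
    (σ dur dem : ι → ℝ) {C A B : ℝ} (hC : 0 < C) (hdur : ∀ u ∈ S, 0 ≤ dur u)
    (hA : ∀ u ∈ S, A ≤ σ u) (hB : ∀ u ∈ S, σ u + dur u ≤ B)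
    (hcap : ∀ t, ∑ u ∈ S with σ u ≤ t ∧ t < σ u + dur u, dem u ≤ C) :
    max (S.sup' hSne dur) (TWork dur dem C S) ≤ B - A := by
  have hdur_le (u : ι) (hu : u ∈ S) : dur u ≤ B - A := by linarith [hA u hu, hB u hu]
  obtain ⟨u, hu⟩ := hSne
  refine max_le (sup'_le _ _ hdur_le) ?_
  rw [TWork, div_le_iff₀ hC, mul_comm]
  exact sum_dur_mul_dem_le_mul_window S σ dur dem (by linarith [hdur_le u hu, hdur u hu])
    hdur hA hB hcap

theorem sum_range_add_sum_Ico_add_gap_le (s d : ℕ → ℝ) {i k : ℕ} (hi0 : 0 < i) (hik : i < k)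
    (hs0 : 0 ≤ s 0) (hstep : ∀ j < k, s j + d j ≤ s (j + 1)) :
    ∑ j ∈ range i, d j + ∑ j ∈ Ico (i + 1) (k + 1), d j + (s (i + 1) - (s (i - 1) + d (i - 1)))
      ≤ s k + d k := by
  have hprefix : s 0 + ∑ j ∈ range i, d j ≤ s (i - 1) + d (i - 1) := by
    obtain ⟨i, rfl⟩ : ∃ i', i = i' + 1 := ⟨i - 1, by omega⟩
    rw [sum_range_succ, range_eq_Ico, Nat.add_sub_cancel]
    linarith [add_sum_Ico_le_of_add_le_succ s d (Nat.zero_le i) fun j _ hj => hstep j (by omega)]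
  have hsuffix : s (i + 1) + ∑ j ∈ Ico (i + 1) (k + 1), d j ≤ s k + d k := by
    rw [sum_Ico_succ_top (by omega)]
    linarith [add_sum_Ico_le_of_add_le_succ s d hik fun j _ hj => hstep j hj]
  linarith

open scoped Classical in
/-- **Validity of the modified critical-path lower bound `ModCP`.**
Let `v 0, …, v k` be an `r`-path and `0 < i < k` an index such that `v i`
belongs to a stage `S` whose tasks all satisfy `r (v (i-1)) u` and
`r u (v (i+1))`. Then for every schedule `σ` respecting precedence and
capacity, the makespan of `σ` is at least
`∑_{j ≠ i} dur (v j) + max (max_{u ∈ S} dur u) (TWork S)`. -/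
theorem modCP_valid {V : Type*} [Fintype V] [Nonempty V]
    (r : V → V → Prop) (dur dem : V → ℝ) (C : ℝ) (σ : V → ℝ)
    (hdur : ∀ v, 0 ≤ dur v) (hdem : ∀ v, 0 ≤ dem v) (hC : 0 < C)
    (hσ : ∀ v, 0 ≤ σ v)
    (hprec : ∀ u v, r u v → σ u + dur u ≤ σ v)
    (hcap : ∀ t : ℝ,
      ∑ w ∈ Finset.univ.filter (fun w => σ w ≤ t ∧ t < σ w + dur w), dem w ≤ C)
    (k : ℕ) (v : Fin (k + 1) → V)
    (hpath : ∀ j : Fin k, r (v j.castSucc) (v j.succ))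
    (i : ℕ) (hi0 : 0 < i) (hik : i < k)
    (S : Finset V) (hSne : S.Nonempty)
    (hall : ∀ u ∈ S,
      r (v ⟨i - 1, by omega⟩) u ∧ r u (v ⟨i + 1, by omega⟩)) :
    (∑ j ∈ Finset.univ.filter (fun j : Fin (k + 1) => (j : ℕ) ≠ i), dur (v j)) +
        max (S.sup' hSne dur) (TWork dur dem C S) ≤
      Finset.univ.sup' Finset.univ_nonempty (fun w => σ w + dur w) := by
  set w : ℕ → V := fun j => v (Fin.ofNat (k + 1) j)
  have hv_mk (j : ℕ) (hj : j < k + 1) : v ⟨j, hj⟩ = w j :=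
    congrArg v (Fin.ext (Nat.mod_eq_of_lt hj).symm)
  have hv (j : Fin (k + 1)) : v j = w j := congrArg v (Fin.ofNat_val_eq_self j).symm
  have hstep (j : ℕ) (hj : j < k) : σ (w j) + dur (w j) ≤ σ (w (j + 1)) := by
    simpa only [Fin.castSucc_mk, Fin.succ_mk, hv_mk] using hprec _ _ (hpath ⟨j, hj⟩)
  have hcapS (t : ℝ) : ∑ u ∈ S with σ u ≤ t ∧ t < σ u + dur u, dem u ≤ C :=
    (sum_le_sum_of_subset_of_nonneg (filter_subset_filter _ (subset_univ S))
      fun u _ _ => hdem u).trans (hcap t)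
  have hstage := max_sup'_TWork_le_window S hSne σ dur dem hC (fun u _ => hdur u)
    (A := σ (w (i - 1)) + dur (w (i - 1))) (B := σ (w (i + 1)))
    (fun u hu => hv_mk (i - 1) (by omega) ▸ hprec _ _ (hall u hu).1)
    (fun u hu => hv_mk (i + 1) (by omega) ▸ hprec _ _ (hall u hu).2) hcapS
  have hchain := sum_range_add_sum_Ico_add_gap_le (fun j => σ (w j)) (fun j => dur (w j))
    hi0 hik (hσ _) hstep
  simp only [hv]
  rw [Fin.sum_filter_val_ne (fun j => dur (w j)) (by omega : i < k + 1)]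
  calc _ ≤ σ (w k) + dur (w k) := by linarith
    _ ≤ _ := le_sup' (fun u => σ u + dur u) (mem_univ _)
end

section
/- (The new lower bound dominates the classical bounds.) Suppose V is partitioned into parts G_1, …, G_m that are totally ordered by reachability: for all i < j and all u ∈ G_i, v ∈ G_j, r* u v holds. Then Σ_{i=1}^{m} max( CPLen(G_i), TWork(G_i) ) ≥ max( CPLen(V), TWork(V) ). -/
namespace List

variable {α β : Type*} {R : α → α → Prop}

theorem IsChain.nodup_of_acyclic (hacyc : ∀ a, ¬ Relation.TransGen R a a) {l : List α}
    (hl : l.IsChain R) : l.Nodup := by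
  refine (hl.imp fun _ _ => Relation.TransGen.single).pairwise.imp ?_
  rintro a _ h rfl
  exact hacyc a h

theorem IsChain.pairwise_comp_le [Preorder β] {f : α → β} (hf : ∀ a b, R a b → f a ≤ f b)
    {l : List α} (hl : l.IsChain R) : l.Pairwise (fun a b => f a ≤ f b) :=
  List.pairwise_map.mp ((List.isChain_map f).mpr (hl.imp hf)).pairwise

/-- Along an `R`-chain on which `f` is monotone, each fibre of `f` occupies a contiguous block, so
filtering the chain by a fibre leaves an `R`-chain. -/
theorem IsChain.filter_fiber [PartialOrder β] [DecidableEq β] {f : α → β}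
    (hf : ∀ a b, R a b → f a ≤ f b) {l : List α} (hl : l.IsChain R) (b : β) :
    (l.filter fun a => f a = b).IsChain R := by
  induction l with
  | nil => exact List.isChain_nil
  | cons a t ih =>
    by_cases ha : f a = b
    · rw [List.filter_cons_of_pos (by simpa using ha), List.isChain_cons]
      refine ⟨?_, ih hl.tail⟩
      cases t with
      | nil => simp
      | cons c t =>
        have hac : R a c := (List.isChain_cons_cons.mp hl).1
        by_cases hc : f c = b
        · simpa [List.filter_cons_of_pos, hc] using hac
        · have hrest : t.filter (fun x => f x = b) = [] := by
            refine List.filter_eq_nil_iff.mpr fun x hx hxb => hc ?_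
            have hcx := List.rel_of_pairwise_cons (hl.tail.pairwise_comp_le hf) hx
            exact le_antisymm (by simpa [of_decide_eq_true hxb] using hcx) (ha ▸ hf a c hac)
          simp [List.filter_cons_of_neg, hc, hrest]
    · rw [List.filter_cons_of_neg (by simpa using ha)]
      exact ih hl.tail

theorem sum_map_eq_sum_fiberwise {M : Type*} [AddCommMonoid M] [Fintype β] [DecidableEq β]
    (l : List α) (f : α → β) (g : α → M) :
    (l.map g).sum = ∑ b, ((l.filter fun a => f a = b).map g).sum := by
  induction l with
  | nil => simp
  | cons a t ih =>
    have hcons : ∀ b, (((a :: t).filter fun x => f x = b).map g).sum =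
        (if f a = b then g a else 0) + ((t.filter fun x => f x = b).map g).sum := by
      intro b
      by_cases h : f a = b <;> simp [h]
    simp only [List.map_cons, List.sum_cons, hcons, Finset.sum_add_distrib, Finset.sum_ite_eq,
      Finset.mem_univ, if_true, ih]

end List

section CriticalPath

variable {V : Type*} (r : V → V → Prop) (dur : V → ℝ)

theorem bddAbove_chain_sums [Fintype V] (hacyc : ∀ v, ¬ Relation.TransGen r v v) (S : Set V) :
    BddAbove {x | ∃ l : List V, l.IsChain r ∧ (∀ v ∈ l, v ∈ S) ∧ x = (l.map dur).sum} := by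
  classical
  refine ⟨∑ v, |dur v|, ?_⟩
  rintro _ ⟨l, hl, -, rfl⟩
  calc (l.map dur).sum = ∑ v ∈ l.toFinset, dur v :=
        (List.sum_toFinset dur (hl.nodup_of_acyclic hacyc)).symm
    _ ≤ ∑ v ∈ l.toFinset, |dur v| := Finset.sum_le_sum fun v _ => le_abs_self _
    _ ≤ ∑ v, |dur v| := Finset.sum_le_sum_of_subset_of_nonneg (Finset.subset_univ _)
        fun v _ _ => abs_nonneg _

variable [Fintype V] {r}

theorem sum_le_CPLen (hacyc : ∀ v, ¬ Relation.TransGen r v v) {S : Set V} {l : List V}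
    (hl : l.IsChain r) (hS : ∀ v ∈ l, v ∈ S) : (l.map dur).sum ≤ CPLen r dur S :=
  le_csSup (bddAbove_chain_sums r dur hacyc S) ⟨l, hl, hS, rfl⟩

theorem CPLen_univ_le_sum_CPLen_fiber {ι : Type*} [Fintype ι] [PartialOrder ι]
    (hacyc : ∀ v, ¬ Relation.TransGen r v v) (f : V → ι) (hf : ∀ u v, r u v → f u ≤ f v) :
    CPLen r dur Set.univ ≤ ∑ i, CPLen r dur (f ⁻¹' {i}) := by
  classical
  refine csSup_le ⟨_, [], List.isChain_nil, by simp, rfl⟩ ?_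
  rintro _ ⟨l, hl, -, rfl⟩
  rw [l.sum_map_eq_sum_fiberwise f dur]
  gcongr with i
  exact sum_le_CPLen dur hacyc (hl.filter_fiber hf i) fun v hv => by
    simpa using (List.mem_filter.mp hv).2

end CriticalPath

theorem TWork_biUnion {V ι : Type*} [DecidableEq V] (dur dem : V → ℝ) (C : ℝ) {s : Finset ι}
    {G : ι → Finset V} (hG : (s : Set ι).PairwiseDisjoint G) :
    TWork dur dem C (s.biUnion G) = ∑ i ∈ s, TWork dur dem C (G i) := by
  rw [TWork, Finset.sum_biUnion hG, Finset.sum_div]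
  rfl

theorem newLB_dominates_classical_general {V : Type*} [Fintype V]
    (r : V → V → Prop) (dur dem : V → ℝ) (C : ℝ)
    (hacyc : ∀ v : V, ¬ Relation.TransGen r v v)
    (m : ℕ) (G : Fin m → Finset V)
    (hdisj : ∀ i j, i ≠ j → Disjoint (G i) (G j))
    (hcover : ∀ v : V, ∃ i, v ∈ G i)
    (hord : ∀ i j : Fin m, i < j →
      ∀ u ∈ G i, ∀ v ∈ G j, Relation.ReflTransGen r u v) :
    max (CPLen r dur Set.univ) (TWork dur dem C Finset.univ) ≤
      ∑ i, max (CPLen r dur (↑(G i))) (TWork dur dem C (G i)) := by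
  classical
  choose part hpart using hcover
  have hfiber : ∀ i, part ⁻¹' {i} = ↑(G i) := fun i => Set.ext fun v =>
    ⟨fun hv => hv ▸ hpart v, fun hv => by_contra fun hne =>
      Finset.disjoint_left.mp (hdisj _ _ hne) (hpart v) hv⟩
  have hmono : ∀ u v, r u v → part u ≤ part v := fun u v huv => by
    by_contra! hlt
    exact hacyc u (.head' huv (hord _ _ hlt v (hpart v) u (hpart u)))
  have hCP : CPLen r dur Set.univ ≤ ∑ i, CPLen r dur (↑(G i)) := by
    simpa only [hfiber] using CPLen_univ_le_sum_CPLen_fiber dur hacyc part hmono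
  have hTW : TWork dur dem C Finset.univ = ∑ i, TWork dur dem C (G i) := by
    rw [← TWork_biUnion dur dem C fun i _ j _ hij => hdisj i j hij]
    congr 1
    ext v
    simpa using ⟨part v, hpart v⟩
  rw [hTW]
  exact max_le (hCP.trans (Finset.sum_le_sum fun i _ => le_max_left _ _))
    (Finset.sum_le_sum fun i _ => le_max_right _ _)

/-- **The new lower bound dominates the classical bounds.**
If the acyclic DAG `V` is partitioned into nonempty parts `G 0, …, G (m-1)`
totally ordered by reachability, then
`∑ i, max (CPLen (G i)) (TWork (G i)) ≥ max (CPLen V) (TWork V)`. -/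
theorem newLB_dominates_classical {V : Type*} [Fintype V] [Nonempty V]
    (r : V → V → Prop) (dur dem : V → ℝ) (C : ℝ)
    (hdur : ∀ v, 0 ≤ dur v) (hdem : ∀ v, 0 ≤ dem v) (hC : 0 < C)
    (hacyc : ∀ v : V, ¬ Relation.TransGen r v v)
    (m : ℕ) (G : Fin m → Finset V)
    (hne : ∀ i, (G i).Nonempty)
    (hdisj : ∀ i j, i ≠ j → Disjoint (G i) (G j))
    (hcover : ∀ v : V, ∃ i, v ∈ G i)
    (hord : ∀ i j : Fin m, i < j →
      ∀ u ∈ G i, ∀ v ∈ G j, Relation.ReflTransGen r u v) :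
    max (CPLen r dur Set.univ) (TWork dur dem C Finset.univ) ≤
      ∑ i, max (CPLen r dur (↑(G i))) (TWork dur dem C (G i)) :=
  newLB_dominates_classical_general r dur dem C hacyc m G hdisj hcover hord
end

section
/- (OPT side of the adversarial DAG in Lemma 1.) For all integers d ≥ 1 and k ≥ 1 there exists a schedule of the d-group instance with makespan at most k + d − 1: one can start the red task of group i at time i − 1, run the remaining k − 1 tasks of group i at distinct integer times in [i, i + k − 2] shifted appropriately, and satisfy all precedence and per-group non-overlap constraints while finishing by time k + d − 1. -/
/-- **OPT side of the adversarial DAG in Lemma 1.**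
For all `d ≥ 1` and `k ≥ 1` there is a schedule (integer start times for the
unit-duration tasks `(i, j) : Fin d × Fin k`) that respects the precedence
constraints (the red task `(i, 0)` finishes before any task of group `i+1`
starts), never runs two tasks of the same group concurrently (distinct start
times within a group), and finishes by time `k + d - 1`. -/
theorem opt_side_adversarial_dag (d k : ℕ) (hd : 1 ≤ d) (hk : 1 ≤ k) :
    ∃ σ : Fin d × Fin k → ℕ,
      (∀ (i : ℕ) (h1 : i < d) (h2 : i + 1 < d) (j : Fin k),
        σ (⟨i, h1⟩, ⟨0, hk⟩) + 1 ≤ σ (⟨i + 1, h2⟩, j)) ∧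
      (∀ (i : Fin d) (j j' : Fin k), j ≠ j' → σ (i, j) ≠ σ (i, j')) ∧
      (∀ (i : Fin d) (j : Fin k), σ (i, j) + 1 ≤ k + d - 1) := by
  refine ⟨fun p => p.1.val + p.2.val, ?_, ?_, ?_⟩
  · intro i h1 h2 j; simp
  · intro i j j' hne h
    dsimp only at h
    exact hne (Fin.ext (by omega))
  · intro i j
    have := i.isLt; have := j.isLt; dsimp only; omega
end
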